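/- arXiv:1011.4884 — 5 statements merged into one kernel-verified Lean document; each statement's English description precedes it below -/
import Mathlib

section
/- Let f : ℂⁿ → ℂ be a mixed polynomial, write g = Re f and h = Im f, and let z ∈ ℂⁿ with z ≠ 0. Then the vectors ∇g(z), ∇h(z) and z are ℝ-linearly dependent in ℂⁿ (equivalently, the fibre f⁻¹(f(z)) does not intersect the sphere of radius ‖z‖ transversally at z) if and only if there exist μ ∈ ℂ \ {0} and λ ∈ ℝ such that λ·z = μ·conj(df)(z,z̄) + conj(μ)·∂̄f(z,z̄). -/
open Complex Filter Finset

noncomputable section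

abbrev MixedCoeff (n : ℕ) := ((Fin n → ℕ) × (Fin n → ℕ)) →₀ ℂ

namespace Mixed

variable {n : ℕ}

/-- Evaluation of a mixed polynomial given by its coefficient function `c`:
`f(z) = Σ c(ν,μ) zᵛ z̄ᵘ`. -/
def eval (c : MixedCoeff n) (z : Fin n → ℂ) : ℂ :=
  c.sum fun p a => a * (∏ i, z i ^ p.1 i) * ∏ i, (starRingEnd ℂ) (z i) ^ p.2 i

/-- `∂f/∂z_i` evaluated at `(z, z̄)`. -/
def dz (c : MixedCoeff n) (i : Fin n) (z : Fin n → ℂ) : ℂ :=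
  c.sum fun p a => a * (p.1 i) * (∏ j, z j ^ (p.1 j - if j = i then 1 else 0)) *
    ∏ j, (starRingEnd ℂ) (z j) ^ p.2 j

/-- `∂f/∂z̄_i` evaluated at `(z, z̄)`. -/
def dzbar (c : MixedCoeff n) (i : Fin n) (z : Fin n → ℂ) : ℂ :=
  c.sum fun p a => a * (p.2 i) * (∏ j, z j ^ p.1 j) *
    ∏ j, (starRingEnd ℂ) (z j) ^ (p.2 j - if j = i then 1 else 0)

/-- The singular locus of `f` as a real map `ℝ²ⁿ → ℝ²`. -/
def Sing (c : MixedCoeff n) : Set (Fin n → ℂ) :=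
  {z | ¬ Function.Surjective ⇑(fderiv ℝ (eval c) z)}

/-- The Milnor set `M(f)`. -/
def Milnor (c : MixedCoeff n) : Set (Fin n → ℂ) :=
  {z | ∃ (l : ℝ) (m : ℂ), m ≠ 0 ∧
    ∀ i, (l : ℂ) * z i = m * (starRingEnd ℂ) (dz c i z) + (starRingEnd ℂ) m * dzbar c i z}

/-- The set `S(f)` of asymptotic ρ-nonregular values. -/
def Sset (c : MixedCoeff n) : Set ℂ :=
  {v | ∃ zk : ℕ → (Fin n → ℂ), (∀ k, zk k ∈ Milnor c) ∧
    Tendsto (fun k => ‖zk k‖) atTop atTop ∧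
    Tendsto (fun k => eval c (zk k)) atTop (nhds v)}

/-- The point of `ℝⁿ` attached to the exponent pair `(ν,μ)`, namely `ν+μ`. -/
def suppPt (p : (Fin n → ℕ) × (Fin n → ℕ)) : Fin n → ℝ := fun i => ((p.1 i + p.2 i : ℕ) : ℝ)

/-- The support of `f`, as a subset of `ℝⁿ`. -/
def suppPts (c : MixedCoeff n) : Set (Fin n → ℝ) := suppPt '' (c.support : Set _)

/-- The Newton polyhedron `Γ₀(f)`: convex hull of `{0} ∪ supp(f)`. -/
def Gamma0 (c : MixedCoeff n) : Set (Fin n → ℝ) := convexHull ℝ (insert 0 (suppPts c))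

/-- `supp(f)‾`: the convex hull of `supp(f) \ {0}`. -/
def suppBar (c : MixedCoeff n) : Set (Fin n → ℝ) := convexHull ℝ (suppPts c \ {0})

/-- `F` is a face of the (compact convex) set `C`: either `C` itself or the set of
minimizers on `C` of a linear functional, and nonempty. -/
def IsFaceOf (C F : Set (Fin n → ℝ)) : Prop :=
  F.Nonempty ∧ (F = C ∨ ∃ a : Fin n → ℝ,
    F = {x ∈ C | ∀ y ∈ C, ∑ i, a i * x i ≤ ∑ i, a i * y i})

/-- `Δ` is a face of the Newton boundary at infinity `Γ⁺(f)`: a face of `Γ₀(f)` not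
containing the origin. -/
def IsGammaPlusFace (c : MixedCoeff n) (Δ : Set (Fin n → ℝ)) : Prop :=
  IsFaceOf (Gamma0 c) Δ ∧ (0 : Fin n → ℝ) ∉ Δ

/-- `Γ⁺(f)` as a subset of `ℝⁿ`: the union of the faces of `Γ₀(f)` not containing `0`. -/
def GammaPlusSet (c : MixedCoeff n) : Set (Fin n → ℝ) :=
  {x | ∃ Δ, IsGammaPlusFace c Δ ∧ x ∈ Δ}

/-- The truncation `f_Δ` of `f` to a subset `Δ ⊆ ℝⁿ`. -/
def trunc (c : MixedCoeff n) (Δ : Set (Fin n → ℝ)) : MixedCoeff n :=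
  @Finsupp.filter _ _ _ (fun p => suppPt p ∈ Δ) (Classical.decPred _) c

/-- Newton non-degeneracy: for every face `Δ` of `Γ⁺(f)`,
`Sing f_Δ ∩ f_Δ⁻¹(0) ∩ (ℂ*)ⁿ = ∅`. -/
def NewtonNonDeg (c : MixedCoeff n) : Prop :=
  ∀ Δ, IsGammaPlusFace c Δ → ∀ z : Fin n → ℂ, (∀ i, z i ≠ 0) →
    eval (trunc c Δ) z = 0 → z ∉ Sing (trunc c Δ)

/-- Newton strong non-degeneracy: for every face `Δ` of `Γ⁺(f)`,
`Sing f_Δ ∩ (ℂ*)ⁿ = ∅`. -/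
def NewtonStronglyNonDeg (c : MixedCoeff n) : Prop :=
  ∀ Δ, IsGammaPlusFace c Δ → ∀ z : Fin n → ℂ, (∀ i, z i ≠ 0) →
    z ∉ Sing (trunc c Δ)

/-- `Δ` is a bad face of `supp(f)‾`. -/
def IsBadFace (c : MixedCoeff n) (Δ : Set (Fin n → ℝ)) : Prop :=
  IsFaceOf (suppBar c) Δ ∧ (0 : Fin n → ℝ) ∈ affineSpan ℝ Δ ∧
    ∃ a : Fin n → ℝ, (∃ i, a i < 0) ∧ (∃ j, 0 < a j) ∧
      {x ∈ suppBar c | ∑ i, a i * x i = 0} = Δ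

/-- `f` depends effectively on all its variables. -/
def EffectiveAll (c : MixedCoeff n) : Prop :=
  ∀ i, ∃ p ∈ c.support, 0 < p.1 i + p.2 i

/-- The Euclidean norm on `ℂⁿ`. -/
def norm2 (v : Fin n → ℂ) : ℝ := Real.sqrt (∑ i, Complex.normSq (v i))

end Mixed

/-!
By the Wirtinger formula the real differential of `f` at `z` is
`u ↦ Σ (∂f/∂zᵢ · uᵢ + ∂f/∂z̄ᵢ · ūᵢ)`, so the real gradients are `∇g = conj(df) + ∂̄f` and
`∇h = i·conj(df) − i·∂̄f`. As `z ≠ 0`, a linear dependence of `∇g, ∇h, z` is a relation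
`a∇g + b∇h = λz` with `(a, b) ≠ 0`, and for `μ = a + bi` its left side is exactly
`μ·conj(df) + conj(μ)·∂̄f`.
-/

open ComplexConjugate

theorem prod_pow_sub_ite_eq_pow_mul_prod_erase {ι R : Type*} [Fintype ι] [DecidableEq ι]
    [CommMonoid R] (w : ι → R) (ν : ι → ℕ) (i : ι) :
    ∏ j, w j ^ (ν j - if j = i then 1 else 0)
      = w i ^ (ν i - 1) * ∏ j ∈ univ.erase i, w j ^ ν j := by
  rw [← mul_prod_erase univ _ (mem_univ i), if_pos rfl]
  congr 1
  exact prod_congr rfl fun j hj => by rw [if_neg (ne_of_mem_erase hj), Nat.sub_zero]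

theorem HasFDerivAt.prod_pow {ι 𝕜 E 𝔸 : Type*} [Fintype ι] [DecidableEq ι]
    [NontriviallyNormedField 𝕜] [NormedCommRing 𝔸] [NormedAlgebra 𝕜 𝔸]
    [NormedAddCommGroup E] [NormedSpace 𝕜 E] {f : ι → E → 𝔸} {f' : ι → E →L[𝕜] 𝔸} {x : E}
    (hf : ∀ i, HasFDerivAt (f i) (f' i) x) (ν : ι → ℕ) :
    HasFDerivAt (fun y => ∏ i, f i y ^ ν i)
      (∑ i, ((ν i : 𝔸) * ∏ j, f j x ^ (ν j - if j = i then 1 else 0)) • f' i) x := by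
  refine (HasFDerivAt.finsetProd fun i _ => (hf i).pow (ν i)).congr_fderiv ?_
  refine sum_congr rfl fun i _ => ?_
  rw [smul_smul, prod_pow_sub_ite_eq_pow_mul_prod_erase, nsmul_eq_mul]
  congr 1
  ring

theorem not_linearIndependent_fin_three_iff {K V : Type*} [DivisionRing K] [AddCommGroup V]
    [Module K V] {u v w : V} (hw : w ≠ 0) :
    ¬LinearIndependent K ![u, v, w] ↔ ∃ a b l : K, (a ≠ 0 ∨ b ≠ 0) ∧ a • u + b • v = l • w := by
  rw [Fintype.not_linearIndependent_iff]
  constructor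
  · rintro ⟨g, hg, i, hi⟩
    refine ⟨g 0, g 1, -g 2, ?_, ?_⟩
    · by_contra! h
      have hgw : g 2 • w = 0 := by simpa [Fin.sum_univ_three, h.1, h.2] using hg
      have h2 : g 2 = 0 := (smul_eq_zero.mp hgw).resolve_right hw
      fin_cases i <;> simp_all
    · rw [neg_smul, eq_neg_iff_add_eq_zero, ← hg, Fin.sum_univ_three]
      rfl
  · rintro ⟨a, b, l, hab, h⟩
    refine ⟨![a, b, -l], ?_, ?_⟩
    · simp [Fin.sum_univ_three, h]
    · rcases hab with ha | hb
      exacts [⟨0, ha⟩, ⟨1, hb⟩]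

namespace Complex

theorem re_mul_add_mul_conj (a b u : ℂ) :
    (a * u + b * conj u).re = (u * conj (conj a + b)).re := by
  simp only [add_re, add_im, mul_re, conj_re, conj_im, map_add, conj_conj]
  ring

theorem eq_of_forall_re_sum_mul_conj_eq {ι : Type*} [Fintype ι] {v w : ι → ℂ}
    (h : ∀ u : ι → ℂ, (∑ i, u i * conj (v i)).re = (∑ i, u i * conj (w i)).re) : v = w := by
  have hvw : (∑ i, ((normSq (v i - w i) : ℝ) : ℂ)).re = 0 := by
    simp only [← mul_conj, map_sub, mul_sub, sum_sub_distrib, sub_re]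
    exact sub_eq_zero.mpr (h (v - w))
  rw [← ofReal_sum, ofReal_re, sum_eq_zero_iff_of_nonneg fun i _ => normSq_nonneg _] at hvw
  funext i
  exact sub_eq_zero.mp (normSq_eq_zero.mp (hvw i (mem_univ i)))

theorem eq_conj_add_of_forall_re_sum_eq {ι : Type*} [Fintype ι] {a b v : ι → ℂ}
    (h : ∀ u : ι → ℂ, (∑ i, (a i * u i + b i * conj (u i))).re = (∑ i, u i * conj (v i)).re) :
    v = fun i => conj (a i) + b i := by
  refine (eq_of_forall_re_sum_mul_conj_eq fun u => ?_).symm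
  rw [← h, re_sum, re_sum]
  exact sum_congr rfl fun i _ => (re_mul_add_mul_conj _ _ _).symm

theorem eq_I_mul_conj_sub_of_forall_im_sum_eq {ι : Type*} [Fintype ι] {a b v : ι → ℂ}
    (h : ∀ u : ι → ℂ, (∑ i, (a i * u i + b i * conj (u i))).im = (∑ i, u i * conj (v i)).re) :
    v = fun i => I * conj (a i) - I * b i := by
  have im_eq_re : ∀ s : ℂ, s.im = (-I * s).re := by simp
  have hv := eq_conj_add_of_forall_re_sum_eq (a := fun i => -I * a i) (b := fun i => -I * b i)
    fun u => by
      rw [← h, im_eq_re, mul_sum]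
      simp only [mul_add, mul_assoc]
  rw [hv]
  funext i
  simp [sub_eq_add_neg]

theorem re_mul_conj_add_add_im_mul_I_mul_conj_sub (m A B : ℂ) :
    (m.re : ℂ) * (conj A + B) + (m.im : ℂ) * (I * conj A - I * B) = m * conj A + conj m * B := by
  apply Complex.ext <;> simp <;> ring

theorem not_linearIndependent_conj_add_iff {ι : Type*} {A B z : ι → ℂ} (hz : z ≠ 0) :
    ¬LinearIndependent ℝ ![fun i => conj (A i) + B i, fun i => I * conj (A i) - I * B i, z] ↔
      ∃ (l : ℝ) (m : ℂ), m ≠ 0 ∧ ∀ i, (l : ℂ) * z i = m * conj (A i) + conj m * B i := by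
  rw [not_linearIndependent_fin_three_iff hz]
  constructor
  · rintro ⟨a, b, l, hab, h⟩
    refine ⟨l, ⟨a, b⟩, fun hm => ?_, fun i => ?_⟩
    · simp only [Complex.ext_iff, zero_re, zero_im] at hm
      tauto
    · rw [← re_mul_conj_add_add_im_mul_I_mul_conj_sub]
      simpa [real_smul, mul_add] using (congrFun h i).symm
  · rintro ⟨l, m, hm, h⟩
    refine ⟨m.re, m.im, l, ?_, funext fun i => ?_⟩
    · by_contra! h0
      exact hm (Complex.ext h0.1 h0.2)
    · simpa [real_smul, mul_add, h] using
        re_mul_conj_add_add_im_mul_I_mul_conj_sub m (A i) (B i)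

end Complex

namespace Mixed

variable {n : ℕ}

theorem eval_eq_sum (c : MixedCoeff n) (w : Fin n → ℂ) :
    eval c w = ∑ p ∈ c.support, c p * ((∏ i, w i ^ p.1 i) * ∏ i, conj (w i) ^ p.2 i) := by
  simp only [eval, Finsupp.sum, mul_assoc]

open ContinuousLinearMap in
theorem hasFDerivAt_eval (c : MixedCoeff n) (z : Fin n → ℂ) :
    HasFDerivAt (eval c)
      (∑ i, (dz c i z • proj i
        + dzbar c i z • (starL' ℝ : ℂ ≃L[ℝ] ℂ).toContinuousLinearMap ∘L proj i)) z := by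
  have hmon := fun p : (Fin n → ℕ) × (Fin n → ℕ) =>
    (HasFDerivAt.prod_pow (fun i => hasFDerivAt_apply (𝕜 := ℝ) i z) p.1).mul
      (HasFDerivAt.prod_pow (fun i => (hasFDerivAt_apply (𝕜 := ℝ) i z).star) p.2)
  rw [funext (eval_eq_sum c)]
  refine (HasFDerivAt.fun_sum fun p _ => (hmon p).const_mul (c p)).congr_fderiv ?_
  ext u
  simp only [_root_.sum_apply, add_apply, smul_apply, ContinuousLinearMap.comp_apply,
    ContinuousLinearMap.proj_apply, ContinuousLinearEquiv.coe_coe, starL'_apply, RCLike.star_def,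
    smul_eq_mul, dz, dzbar, Finsupp.sum, Finset.sum_mul, Finset.mul_sum, ← Finset.sum_add_distrib]
  rw [Finset.sum_comm]
  refine sum_congr rfl fun p _ => sum_congr rfl fun i _ => ?_
  ring

theorem fderiv_re_eval_apply (c : MixedCoeff n) (z u : Fin n → ℂ) :
    fderiv ℝ (fun w => (eval c w).re) z u
      = (∑ i, (dz c i z * u i + dzbar c i z * conj (u i))).re := by
  have h : HasFDerivAt (fun w => (eval c w).re) _ z :=
    reCLM.hasFDerivAt.comp z (hasFDerivAt_eval c z)
  rw [h.fderiv]
  simp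

theorem fderiv_im_eval_apply (c : MixedCoeff n) (z u : Fin n → ℂ) :
    fderiv ℝ (fun w => (eval c w).im) z u
      = (∑ i, (dz c i z * u i + dzbar c i z * conj (u i))).im := by
  have h : HasFDerivAt (fun w => (eval c w).im) _ z :=
    imCLM.hasFDerivAt.comp z (hasFDerivAt_eval c z)
  rw [h.fderiv]
  simp

end Mixed

/-- Lemma 2.1: for a mixed polynomial `f` with `g = Re f`, `h = Im f`
and `z ≠ 0`, the gradients `∇g(z)`, `∇h(z)` and the vector `z` are `ℝ`-linearly
dependent (equivalently, the fibre of `f` through `z` does not meet the sphere of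
radius `‖z‖` transversally at `z`) iff there are `μ ∈ ℂ*` and `λ ∈ ℝ` with
`λ·z = μ·conj(df)(z,z̄) + conj(μ)·∂̄f(z,z̄)`. -/
theorem mixed_sphere_nontransversality_iff {n : ℕ} (c : MixedCoeff n) (z : Fin n → ℂ)
    (hz : z ≠ 0) (vg vh : Fin n → ℂ)
    (hg : ∀ u : Fin n → ℂ, fderiv ℝ (fun w => (Mixed.eval c w).re) z u
        = (∑ i, u i * (starRingEnd ℂ) (vg i)).re)
    (hh : ∀ u : Fin n → ℂ, fderiv ℝ (fun w => (Mixed.eval c w).im) z u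
        = (∑ i, u i * (starRingEnd ℂ) (vh i)).re) :
    (¬ LinearIndependent ℝ ![vg, vh, z]) ↔
      ∃ (l : ℝ) (m : ℂ), m ≠ 0 ∧ ∀ i, (l : ℂ) * z i
        = m * (starRingEnd ℂ) (Mixed.dz c i z) + (starRingEnd ℂ) m * Mixed.dzbar c i z := by
  have hvg : vg = fun i => conj (Mixed.dz c i z) + Mixed.dzbar c i z :=
    eq_conj_add_of_forall_re_sum_eq fun u => by rw [← hg, Mixed.fderiv_re_eval_apply]
  have hvh : vh = fun i => I * conj (Mixed.dz c i z) - I * Mixed.dzbar c i z :=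
    eq_I_mul_conj_sub_of_forall_im_sum_eq fun u => by rw [← hh, Mixed.fderiv_im_eval_apply]
  rw [hvg, hvh]
  exact not_linearIndependent_conj_add_iff hz
end
end

section
/- Let f : ℂⁿ → ℂ be a mixed polynomial and z ∈ ℂⁿ. Then z ∈ Sing f if and only if there exists μ ∈ ℂ with |μ| = 1 such that conj(df)(z,z̄) = μ·∂̄f(z,z̄). -/
open Complex Filter Finset

noncomputable section

/-!
The real derivative of `f` at `z` is `v ↦ ∑ᵢ (∂f/∂zᵢ) vᵢ + (∂f/∂z̄ᵢ) v̄ᵢ`. A real-linear map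
`L` to `ℂ ≅ ℝ²` fails to be onto iff its image lies in a real line `ℝω`, i.e.
`Im (ω̄ · L v) = 0` for all `v`. For `L` of the above shape this says
`ω · conj (∂f/∂zᵢ) = ω̄ · ∂f/∂z̄ᵢ` for all `i`, and `μ = ω̄ / ω` runs over the unit circle
as `ω` runs over `ℂˣ`.
-/

open ComplexConjugate

theorem LinearMap.not_surjective_iff_exists_im_conj_mul_eq_zero {E : Type*} [AddCommGroup E]
    [Module ℝ E] (L : E →ₗ[ℝ] ℂ) :
    ¬ Function.Surjective L ↔ ∃ ω : ℂ, ω ≠ 0 ∧ ∀ v, (conj ω * L v).im = 0 := by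
  constructor
  · intro hL
    obtain ⟨f, hf, hfL⟩ := Submodule.exists_dual_map_eq_bot_of_lt_top
      (lt_top_iff_ne_top.2 (mt LinearMap.range_eq_top.1 hL)) inferInstance
    have hf_apply : ∀ w : ℂ, f w = (conj ⟨f I, -f 1⟩ * w).im := fun w => by
      have hw : w = w.re • (1 : ℂ) + w.im • I := by apply Complex.ext <;> simp
      rw [hw, map_add, map_smul, map_smul]
      simp only [mul_im, conj_re, conj_im, smul_eq_mul, add_re, add_im, smul_re, smul_im,
        one_re, one_im, I_re, I_im]
      ring
    refine ⟨⟨f I, -f 1⟩, fun h => hf ?_, fun v => ?_⟩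
    · ext w
      rw [hf_apply w, h]
      simp
    · rw [← hf_apply, ← Submodule.mem_bot ℝ, ← hfL]
      exact Submodule.mem_map_of_mem (LinearMap.mem_range_self L v)
  · rintro ⟨ω, hω, hL⟩ hsurj
    obtain ⟨v, hv⟩ := hsurj (ω * I)
    have := hL v
    rw [hv, ← mul_assoc, conj_mul', ← ofReal_pow, mul_I_im, ofReal_re] at this
    exact hω (by simpa using this)

theorem Complex.exists_conj_div_self_eq {m : ℂ} (hm : ‖m‖ = 1) :
    ∃ ω : ℂ, ω ≠ 0 ∧ conj ω / ω = m := by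
  obtain ⟨ω, hω⟩ := IsAlgClosed.exists_pow_nat_eq (conj m) two_pos
  have hω0 : ω ≠ 0 := by
    rintro rfl
    have : m = 0 := by simpa using hω.symm
    simp [this] at hm
  have hωω : ω * conj ω = 1 := by
    have : ‖ω‖ ^ 2 = 1 := by rw [← norm_pow, hω, RCLike.norm_conj, hm]
    rw [mul_conj', ← ofReal_pow, this, ofReal_one]
  have hmm : m * conj m = 1 := by
    rw [mul_conj', hm]
    simp
  refine ⟨ω, hω0, (div_eq_iff hω0).2 (mul_left_cancel₀ hω0 ?_)⟩
  linear_combination hωω - m * hω - hmm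

theorem Finset.prod_pow_sub_ite_eq_mul_prod_erase {ι M : Type*} [Fintype ι] [DecidableEq ι]
    [CommMonoid M] (x : ι → M) (k : ι → ℕ) (i : ι) :
    ∏ j, x j ^ (k j - if j = i then 1 else 0) =
      x i ^ (k i - 1) * ∏ j ∈ univ.erase i, x j ^ k j := by
  rw [← mul_prod_erase univ _ (mem_univ i), if_pos rfl]
  congr 1
  exact prod_congr rfl fun j hj => by rw [if_neg (ne_of_mem_erase hj), Nat.sub_zero]

section Wirtinger

variable {ι : Type*} [Fintype ι]

theorem Complex.forall_im_sum_mul_eq_zero_iff (c : ι → ℂ) :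
    (∀ v : ι → ℂ, (∑ i, c i * v i).im = 0) ↔ c = 0 := by
  classical
  refine ⟨fun h => funext fun i => ?_, by rintro rfl; simp⟩
  simpa [Pi.single_apply, mul_left_comm, mul_conj] using h (Pi.single i (I * conj (c i)))

theorem hasFDerivAt_prod_pow {𝕜 𝔸 : Type*} [DecidableEq ι] [NontriviallyNormedField 𝕜]
    [NormedCommRing 𝔸] [NormedAlgebra 𝕜 𝔸] (k : ι → ℕ) (x : ι → 𝔸) :
    HasFDerivAt (fun x : ι → 𝔸 => ∏ j, x j ^ k j)
      (∑ i, (k i * ∏ j, x j ^ (k j - if j = i then 1 else 0)) •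
        ContinuousLinearMap.proj (R := 𝕜) (φ := fun _ : ι => 𝔸) i) x := by
  have := HasFDerivAt.finsetProd (u := univ) fun i _ =>
    ((hasFDerivAt_apply (𝕜 := 𝕜) i x).pow (k i) : HasFDerivAt (fun y : ι → 𝔸 => y i ^ k i) _ x)
  refine this.congr_fderiv (sum_congr rfl fun i _ => ?_)
  ext v
  simp only [nsmul_eq_mul, smul_apply, ContinuousLinearMap.proj_apply, smul_eq_mul,
    prod_pow_sub_ite_eq_mul_prod_erase]
  ring

theorem hasFDerivAt_prod_conj_pow [DecidableEq ι] (k : ι → ℕ) (z : ι → ℂ) :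
    HasFDerivAt (fun z : ι → ℂ => ∏ j, conj (z j) ^ k j)
      (∑ i, (k i * ∏ j, conj (z j) ^ (k j - if j = i then 1 else 0)) •
        (conjCLE : ℂ →L[ℝ] ℂ).comp (ContinuousLinearMap.proj i)) z := by
  let conjPi : (ι → ℂ) →L[ℝ] (ι → ℂ) :=
    ContinuousLinearMap.pi fun i => (conjCLE : ℂ →L[ℝ] ℂ).comp (ContinuousLinearMap.proj i)
  have := (hasFDerivAt_prod_pow (𝕜 := ℝ) k (conjPi z)).comp z conjPi.hasFDerivAt
  refine this.congr_fderiv ?_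
  ext v
  simp [conjPi]

/-- The real-linear map `ℂⁿ → ℂ` with Wirtinger coefficients `a` (along `dzᵢ`) and `b`
(along `dz̄ᵢ`); every real-linear map `ℂⁿ → ℂ` is of this form. -/
def wirtingerCLM (a b : ι → ℂ) : (ι → ℂ) →L[ℝ] ℂ :=
  ∑ i, (a i • ContinuousLinearMap.proj i +
    b i • (conjCLE : ℂ →L[ℝ] ℂ).comp (ContinuousLinearMap.proj i))

@[simp]
theorem wirtingerCLM_apply (a b v : ι → ℂ) :
    wirtingerCLM a b v = ∑ i, (a i * v i + b i * conj (v i)) := by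
  simp [wirtingerCLM]

theorem forall_im_conj_mul_wirtingerCLM_eq_zero_iff (a b : ι → ℂ) (ω : ℂ) :
    (∀ v, (conj ω * wirtingerCLM a b v).im = 0) ↔ ∀ i, ω * conj (a i) = conj ω * b i := by
  have key : ∀ v, (conj ω * wirtingerCLM a b v).im =
      (∑ i, (conj ω * a i - ω * conj (b i)) * v i).im := fun v => by
    simp only [wirtingerCLM_apply, mul_sum, im_sum]
    refine sum_congr rfl fun i _ => ?_
    simp only [mul_im, mul_re, add_im, add_re, sub_im, sub_re, conj_re, conj_im]
    ring
  simp only [key, forall_im_sum_mul_eq_zero_iff, funext_iff, Pi.zero_apply, sub_eq_zero]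
  refine forall_congr' fun i => ?_
  rw [← (starRingEnd ℂ).injective.eq_iff]
  simp

theorem not_surjective_wirtingerCLM_iff (a b : ι → ℂ) :
    ¬ Function.Surjective (wirtingerCLM a b) ↔
      ∃ m : ℂ, ‖m‖ = 1 ∧ ∀ i, conj (a i) = m * b i := by
  rw [← ContinuousLinearMap.coe_coe, LinearMap.not_surjective_iff_exists_im_conj_mul_eq_zero]
  simp only [ContinuousLinearMap.coe_coe, forall_im_conj_mul_wirtingerCLM_eq_zero_iff]
  constructor
  · rintro ⟨ω, hω, h⟩
    refine ⟨conj ω / ω, ?_, fun i => ?_⟩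
    · rw [norm_div, RCLike.norm_conj, div_self (norm_ne_zero_iff.2 hω)]
    · rw [div_mul_eq_mul_div, eq_div_iff hω, ← h i, mul_comm]
  · rintro ⟨m, hm, h⟩
    obtain ⟨ω, hω, rfl⟩ := exists_conj_div_self_eq hm
    refine ⟨ω, hω, fun i => ?_⟩
    rw [h i, div_mul_eq_mul_div, mul_div_cancel₀ _ hω]

end Wirtinger

theorem Mixed.hasFDerivAt_eval_s1 {n : ℕ} (c : MixedCoeff n) (z : Fin n → ℂ) :
    HasFDerivAt (Mixed.eval c) (wirtingerCLM (Mixed.dz c · z) (Mixed.dzbar c · z)) z := by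
  have := HasFDerivAt.fun_sum (u := c.support) fun p _ =>
    ((hasFDerivAt_prod_pow (𝕜 := ℝ) p.1 z).const_mul (c p)).mul (hasFDerivAt_prod_conj_pow p.2 z)
  refine this.congr_fderiv (ContinuousLinearMap.ext fun v => ?_)
  simp only [wirtingerCLM_apply, Mixed.dz, Mixed.dzbar, Finsupp.sum, sum_mul, ← sum_add_distrib]
  rw [sum_comm, FunLike.coe_sum, Finset.sum_apply]
  refine sum_congr rfl fun p _ => ?_
  simp only [add_apply, smul_apply, _root_.sum_apply,
    ContinuousLinearMap.comp_apply, ContinuousLinearMap.proj_apply, ContinuousLinearEquiv.coe_coe,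
    ContinuousAlgEquiv.coeCLE_apply, conjCAE_apply, smul_eq_mul, mul_sum, ← sum_add_distrib]
  exact sum_congr rfl fun i _ => by ring

/-- Lemma 2.2, Oka: `z ∈ Sing f` iff there is `μ ∈ ℂ` with `|μ| = 1` such
that `conj(df)(z,z̄) = μ·∂̄f(z,z̄)`. -/
theorem mixed_sing_iff {n : ℕ} (c : MixedCoeff n) (z : Fin n → ℂ) :
    z ∈ Mixed.Sing c ↔ ∃ m : ℂ, ‖m‖ = 1 ∧
      ∀ i, (starRingEnd ℂ) (Mixed.dz c i z) = m * Mixed.dzbar c i z := by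
  rw [Mixed.Sing, Set.mem_ofPred_eq, (Mixed.hasFDerivAt_eval_s1 c z).fderiv]
  exact not_surjective_wirtingerCLM_iff _ _
end
end

section
/- Let f : ℂⁿ → ℂ be a mixed polynomial with supp(f) \ {0} ≠ ∅, and let p = (p₁,…,pₙ) ∈ ℝⁿ with min_i p_i < 0. Let ℓ_p(x) = p₁x₁ + … + pₙxₙ, let d_p be the minimum of ℓ_p on supp(f)‾ (the convex hull of supp(f) \ {0}), and let Δ_p := {x ∈ supp(f)‾ | ℓ_p(x) = d_p}. If d_p = 0, then either Δ_p is a face of Γ⁺(f) (i.e. there exists a linear functional ℓ on ℝⁿ with Δ_p = {x ∈ Γ₀(f) | ℓ(x) = min over Γ₀(f) of ℓ} and 0 ∉ Δ_p), or the affine span of Δ_p contains the origin. -/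
open Complex Filter Finset

noncomputable section

section Aux

variable {E : Type*} [AddCommGroup E] [Module ℝ E]

private lemma mem_hull_min (t : Finset E) (L : E →ₗ[ℝ] ℝ) (m : ℝ)
    [DecidablePred fun v => L v = m]
    (hv : ∀ v ∈ t, m ≤ L v) {x : E} (hx : x ∈ convexHull ℝ (t : Set E)) (hLx : L x = m) :
    x ∈ convexHull ℝ ((t.filter fun v => L v = m : Finset E) : Set E) := by
  rw [Finset.convexHull_eq] at hx
  obtain ⟨w, hw0, hw1, hwx⟩ := hx
  have hx' : ∑ v ∈ t, w v • v = x := by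
    rw [← hwx, Finset.centerMass_eq_of_sum_1 _ _ hw1]
    rfl
  have hLsum : ∑ v ∈ t, w v * L v = m := by
    rw [← hLx, ← hx', map_sum]
    simp [smul_eq_mul]
  have hzero : ∀ v ∈ t, L v ≠ m → w v = 0 := by
    have h0 : ∑ v ∈ t, w v * (L v - m) = 0 := by
      have : ∑ v ∈ t, w v * (L v - m) = (∑ v ∈ t, w v * L v) - (∑ v ∈ t, w v) * m := by
        rw [Finset.sum_mul, ← Finset.sum_sub_distrib]
        exact Finset.sum_congr rfl fun v _ => by ring
      rw [this, hLsum, hw1, one_mul, sub_self]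
    have hterm := (Finset.sum_eq_zero_iff_of_nonneg
      (fun v hv' => mul_nonneg (hw0 v hv') (sub_nonneg.2 (hv v hv')))).1 h0
    intro v hvt hne
    rcases mul_eq_zero.1 (hterm v hvt) with h | h
    · exact h
    · exact absurd (sub_eq_zero.1 h) hne
  set t' := t.filter fun v => L v = m with ht'
  have hsum' : ∑ v ∈ t', w v = 1 := by
    rw [← hw1]
    refine Finset.sum_subset (Finset.filter_subset _ _) fun v hvt hv' => ?_
    exact hzero v hvt (by simpa [ht', hvt] using hv')
  have hx'' : t'.centerMass w id = x := by
    rw [Finset.centerMass_eq_of_sum_1 _ _ hsum', ← hx']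
    refine Finset.sum_subset (Finset.filter_subset _ _) fun v hvt hv' => ?_
    rw [hzero v hvt (by simpa [ht', hvt] using hv'), zero_smul]
  rw [← hx'']
  exact Finset.centerMass_mem_convexHull _ (fun v hv' => hw0 v (Finset.mem_filter.1 hv').1)
    (by rw [hsum']; norm_num) (fun v hv' => Finset.mem_coe.2 hv')

end Aux



/-- Lemma 3.8(b): if the minimum `d_p = 0` of `ℓ_p` on `supp(f)‾`, then
either `Δ_p` is a face of `Γ⁺(f)`, or the affine span of `Δ_p` contains the origin. -/
theorem face_of_zero_min {n : ℕ} (c : MixedCoeff n)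
    (hsupp : (Mixed.suppPts c \ {0}).Nonempty)
    (p : Fin n → ℝ) (hp : ∃ i, p i < 0) (d : ℝ) (Δp : Set (Fin n → ℝ))
    (hΔp : Δp = {x ∈ Mixed.suppBar c | ∑ i, p i * x i = d})
    (hd1 : ∀ x ∈ Mixed.suppBar c, d ≤ ∑ i, p i * x i)
    (hd2 : ∃ x ∈ Mixed.suppBar c, ∑ i, p i * x i = d)
    (hdzero : d = 0) :
    ((∃ a : Fin n → ℝ,
        Δp = {x ∈ Mixed.Gamma0 c | ∀ y ∈ Mixed.Gamma0 c, ∑ i, a i * x i ≤ ∑ i, a i * y i}) ∧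
      (0 : Fin n → ℝ) ∉ Δp) ∨
    (0 : Fin n → ℝ) ∈ affineSpan ℝ Δp := by
  classical
  subst hdzero
  subst hΔp
  set Lp : (Fin n → ℝ) →ₗ[ℝ] ℝ := ∑ i, p i • LinearMap.proj i with hLpdef
  have hLp : ∀ x : Fin n → ℝ, Lp x = ∑ i, p i * x i := by
    intro x
    simp [hLpdef, LinearMap.sum_apply, smul_eq_mul]
  set Δ : Set (Fin n → ℝ) := {x ∈ Mixed.suppBar c | ∑ i, p i * x i = 0} with hΔdef
  by_cases h0 : (0 : Fin n → ℝ) ∈ affineSpan ℝ Δ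
  · exact Or.inr h0
  left
  -- finset descriptions
  set F : Finset (Fin n → ℝ) := c.support.image Mixed.suppPt with hF
  have hsuppPts : Mixed.suppPts c = (F : Set (Fin n → ℝ)) := by
    rw [hF, Finset.coe_image]; rfl
  set S : Finset (Fin n → ℝ) := F.filter (fun v => v ≠ 0) with hS
  have hSBar : Mixed.suppBar c = convexHull ℝ (S : Set (Fin n → ℝ)) := by
    rw [Mixed.suppBar, hsuppPts]
    congr 1
    ext v
    simp [hS, Set.mem_diff]
  have hΓ : Mixed.Gamma0 c = convexHull ℝ ((insert (0 : Fin n → ℝ) S : Finset _) : Set _) := by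
    rw [Mixed.Gamma0, hsuppPts]
    congr 1
    ext v
    by_cases hv : v = 0 <;> simp [hS, hv]
  -- nonnegativity on S
  have hSpos : ∀ v ∈ S, (0:ℝ) ≤ Lp v := by
    intro v hv
    rw [hLp]
    exact hd1 v (hSBar ▸ subset_convexHull ℝ _ (Finset.mem_coe.2 hv))
  set S₀ : Finset (Fin n → ℝ) := S.filter (fun v => Lp v = 0) with hS₀
  -- Δ = conv S₀
  have hΔhull : Δ = convexHull ℝ (S₀ : Set (Fin n → ℝ)) := by
    apply Set.Subset.antisymm
    · rintro x ⟨hx1, hx2⟩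
      exact mem_hull_min S Lp 0 hSpos (hSBar ▸ hx1) ((hLp x).trans hx2)
    · apply convexHull_min
      · intro v hv
        obtain ⟨hvS, hv0⟩ := Finset.mem_filter.1 (Finset.mem_coe.1 hv)
        exact ⟨hSBar ▸ subset_convexHull ℝ _ (Finset.mem_coe.2 hvS), (hLp v) ▸ hv0⟩
      · have : Δ = Mixed.suppBar c ∩ {x | Lp x = 0} := by
          ext x; simp [hΔdef, hLp]
        rw [this]
        exact (convex_convexHull ℝ _).inter (convex_hyperplane Lp.isLinear 0)
  -- a point of Δ
  obtain ⟨x₀, hx₀B, hx₀p⟩ := hd2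
  have hx₀Δ : x₀ ∈ Δ := ⟨hx₀B, hx₀p⟩
  -- dual functional
  have hx₀W : x₀ ∉ vectorSpan ℝ Δ := by
    intro hW
    apply h0
    have h1 : x₀ ∈ affineSpan ℝ Δ := subset_affineSpan ℝ Δ hx₀Δ
    have h2 : (-x₀) ∈ (affineSpan ℝ Δ).direction := by
      rw [direction_affineSpan]; exact neg_mem hW
    have := AffineSubspace.vadd_mem_of_mem_direction h2 h1
    simpa using this
  obtain ⟨g, hg0, hgW⟩ := (vectorSpan ℝ Δ).exists_dual_map_eq_bot_of_notMem hx₀W inferInstance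
  set f : (Fin n → ℝ) →ₗ[ℝ] ℝ := (g x₀)⁻¹ • g with hfdef
  have hfx₀ : f x₀ = 1 := by
    simp [hfdef, inv_mul_cancel₀ hg0]
  have hfW : ∀ w ∈ vectorSpan ℝ Δ, f w = 0 := by
    intro w hw
    have : g w = 0 := by
      have hmem : g w ∈ (vectorSpan ℝ Δ).map g := Submodule.mem_map_of_mem hw
      rw [hgW] at hmem
      simpa using hmem
    simp [hfdef, this]
  have hf1 : ∀ y ∈ Δ, f y = 1 := by
    intro y hy
    have hsub : y - x₀ ∈ vectorSpan ℝ Δ := by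
      have := AffineSubspace.vsub_mem_direction (subset_affineSpan ℝ Δ hy)
        (subset_affineSpan ℝ Δ hx₀Δ)
      rwa [direction_affineSpan] at this
    have := hfW _ hsub
    rw [map_sub] at this
    linarith [hfx₀]
  -- choose ε
  set Sp : Finset (Fin n → ℝ) := S.filter (fun v => Lp v ≠ 0) with hSp
  set ε : ℝ := if h : Sp.Nonempty then
      min 1 (Sp.inf' h (fun v => Lp v / (|f v - 1| + 1))) else 1 with hε
  have hεpos : 0 < ε := by
    rw [hε]
    split
    · rename_i h
      refine lt_min one_pos ?_
      rw [Finset.lt_inf'_iff]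
      intro v hv
      obtain ⟨hvS, hvne⟩ := Finset.mem_filter.1 hv
      have h1 : 0 < Lp v := lt_of_le_of_ne (hSpos v hvS) (Ne.symm hvne)
      positivity
    · exact one_pos
  have hεSp : ∀ v ∈ Sp, -ε < Lp v - ε * f v := by
    intro v hv
    have hne : Sp.Nonempty := ⟨v, hv⟩
    have hεle : ε ≤ Lp v / (|f v - 1| + 1) := by
      rw [hε, dif_pos hne]
      exact (min_le_right _ _).trans (Finset.inf'_le _ hv)
    have hD : (0:ℝ) < |f v - 1| + 1 := by positivity
    have h1 : ε * (|f v - 1| + 1) ≤ Lp v := by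
      rwa [← le_div_iff₀ hD]
    have h2 : ε * (f v - 1) ≤ ε * |f v - 1| :=
      mul_le_mul_of_nonneg_left (le_abs_self _) hεpos.le
    nlinarith
  -- the linear functional
  set La : (Fin n → ℝ) →ₗ[ℝ] ℝ := Lp - ε • f with hLadef
  have hLa : ∀ x, La x = Lp x - ε * f x := by
    intro x; simp [hLadef, smul_eq_mul]
  -- values on vertices
  have hvertex : ∀ v ∈ insert (0 : Fin n → ℝ) S, -ε ≤ La v := by
    intro v hv
    rcases Finset.mem_insert.1 hv with rfl | hvS
    · simp [hLa]; linarith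
    · rw [hLa]
      by_cases hv0 : Lp v = 0
      · have : v ∈ Δ := hΔhull ▸ subset_convexHull ℝ _
          (Finset.mem_coe.2 (Finset.mem_filter.2 ⟨hvS, hv0⟩))
        rw [hv0, hf1 v this]; linarith
      · exact (hεSp v (Finset.mem_filter.2 ⟨hvS, hv0⟩)).le
  have hΓlb : ∀ y ∈ Mixed.Gamma0 c, -ε ≤ La y := by
    intro y hy
    rw [hΓ] at hy
    exact convexHull_min hvertex (convex_halfSpace_ge La.isLinear (-ε)) hy
  have hΔval : ∀ x ∈ Δ, La x = -ε := by
    intro x hx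
    rw [hΔhull] at hx
    refine convexHull_min (t := {x | La x = -ε}) ?_ (convex_hyperplane La.isLinear (-ε)) hx
    intro v hv
    obtain ⟨hvS, hv0⟩ := Finset.mem_filter.1 (Finset.mem_coe.1 hv)
    have hvΔ : v ∈ Δ := hΔhull ▸ subset_convexHull ℝ _ hv
    show La v = -ε
    rw [hLa, hv0, hf1 v hvΔ]; ring
  have hΔΓ : Δ ⊆ Mixed.Gamma0 c := by
    rw [hΔhull, hΓ]
    exact convexHull_mono (by
      intro v hv
      obtain ⟨hvS, _⟩ := Finset.mem_filter.1 (Finset.mem_coe.1 hv)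
      exact Finset.mem_coe.2 (Finset.mem_insert_of_mem hvS))
  -- the coefficient vector
  refine ⟨⟨fun i => p i - ε * f (Pi.single i 1), ?_⟩, fun h => h0 (subset_affineSpan ℝ Δ h)⟩
  have hfsum : ∀ x : Fin n → ℝ, f x = ∑ i, x i * f (Pi.single i 1) := by
    intro x
    conv_lhs => rw [pi_eq_sum_univ x]
    rw [map_sum]
    refine Finset.sum_congr rfl fun i _ => ?_
    rw [map_smul, smul_eq_mul]
    congr 2
    ext j
    simp [Pi.single_apply, eq_comm]
  have hasum : ∀ x : Fin n → ℝ,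
      ∑ i, (p i - ε * f (Pi.single i 1)) * x i = La x := by
    intro x
    rw [hLa, hLp, hfsum]
    rw [Finset.mul_sum, ← Finset.sum_sub_distrib]
    exact Finset.sum_congr rfl fun i _ => by ring
  apply Set.Subset.antisymm
  · intro x hx
    refine ⟨hΔΓ hx, fun y hy => ?_⟩
    rw [hasum, hasum, hΔval x hx]
    exact hΓlb y hy
  · rintro x ⟨hxΓ, hxmin⟩
    have hx₀Γ : x₀ ∈ Mixed.Gamma0 c := hΔΓ hx₀Δ
    have hle : La x ≤ -ε := by
      have := hxmin x₀ hx₀Γ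
      rw [hasum, hasum, hΔval x₀ hx₀Δ] at this
      exact this
    have heq : La x = -ε := le_antisymm hle (hΓlb x hxΓ)
    have hmem := mem_hull_min (insert (0 : Fin n → ℝ) S) La (-ε) hvertex (hΓ ▸ hxΓ) heq
    rw [hΔhull]
    refine convexHull_mono ?_ hmem
    intro v hv
    obtain ⟨hvins, hvval⟩ := Finset.mem_filter.1 (Finset.mem_coe.1 hv)
    rcases Finset.mem_insert.1 hvins with rfl | hvS
    · exfalso
      have : La (0 : Fin n → ℝ) = 0 := map_zero La
      rw [hvval] at this
      linarith
    · by_cases hv0 : Lp v = 0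
      · exact Finset.mem_coe.2 (Finset.mem_filter.2 ⟨hvS, hv0⟩)
      · exfalso
        have := hεSp v (Finset.mem_filter.2 ⟨hvS, hv0⟩)
        rw [← hLa] at this
        rw [hvval] at this
        linarith
end
end

section
/- If a mixed polynomial f : ℂⁿ → ℂ is Newton non-degenerate, then for every bad face Δ of supp(f)‾ the truncation f_Δ is Newton non-degenerate. -/
open Complex Filter Finset

noncomputable section

/-! Because `0` lies in the affine span of the bad face `Δ`, the functional exposing `Δ` in
`supp(f)‾` vanishes on `Δ`: there is `g` with `g ≥ 0` on `supp(f)‾` and `g = 0` exactly on `Δ`.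
A face `Δ'` of `Γ⁺(f_Δ)` minimizes some `b` on `Γ₀(f_Δ) = conv({0} ∪ supp(f) ∩ {g = 0})`.
For `t ≫ 0`, `b + t g` is minimized on the finite set `{0} ∪ supp(f)` exactly at the points of
`{g = 0}` where `b` is minimal, so it exposes a face `Δ''` of `Γ⁺(f)` with
`f_{Δ''} = (f_Δ)_{Δ'}`, and non-degeneracy of `f` on `Δ''` is the claim. -/

section Minimization

variable {E : Type*} [AddCommGroup E] [Module ℝ E]

theorem LinearMap.isMinOn_convexHull_iff (φ : E →ₗ[ℝ] ℝ) {T : Set E} {x : E} :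
    IsMinOn φ (convexHull ℝ T) x ↔ IsMinOn φ T x := by
  refine ⟨fun h => h.on_subset (subset_convexHull ℝ T), fun h => isMinOn_iff.2 fun y hy => ?_⟩
  obtain ⟨u, hu, huy⟩ :=
    (φ.concaveOn convex_univ).exists_le_of_mem_convexHull (Set.subset_univ T) hy
  exact (isMinOn_iff.1 h u hu).trans huy

theorem LinearMap.eq_zero_of_eqOn_of_zero_mem_affineSpan {K V : Type*} [Field K]
    [AddCommGroup V] [Module K V] (φ : V →ₗ[K] K) {F : Set V} {r : K}
    (h : ∀ x ∈ F, φ x = r) (h0 : (0 : V) ∈ affineSpan K F) : r = 0 := by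
  have hmem : φ.toAffineMap 0 ∈ affineSpan K (φ.toAffineMap '' F) := by
    rw [← AffineSubspace.map_span]
    exact ⟨0, h0, rfl⟩
  have hsub : φ.toAffineMap '' F ⊆ {r} := by
    rintro _ ⟨x, hx, rfl⟩
    exact h x hx
  have := affineSpan_mono K hsub hmem
  rw [AffineSubspace.mem_affineSpan_singleton] at this
  simpa using this.symm

theorem LinearMap.exists_mem_isMinOn_convexHull (φ : E →ₗ[ℝ] ℝ) {T : Set E} {x : E}
    (hx : x ∈ convexHull ℝ T) (h : IsMinOn φ (convexHull ℝ T) x) :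
    ∃ u ∈ T, IsMinOn φ (convexHull ℝ T) u := by
  obtain ⟨u, hu, hux⟩ :=
    (φ.concaveOn convex_univ).exists_le_of_mem_convexHull (Set.subset_univ T) hx
  exact ⟨u, hu, isMinOn_iff.2 fun y hy => hux.trans (isMinOn_iff.1 h y hy)⟩

theorem Set.Finite.exists_lt_add_mul {α : Type*} {T : Set α} (hT : T.Finite) (φ ψ : α → ℝ)
    (m : ℝ) : ∃ t : ℝ, ∀ s ∈ T, 0 < ψ s → m < φ s + t * ψ s := by
  obtain ⟨t, ht⟩ := (hT.image fun s => (m - φ s) / ψ s).bddAbove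
  refine ⟨t + 1, fun s hs hψ => ?_⟩
  have := (div_lt_iff₀ hψ).1 ((ht ⟨s, hs, rfl⟩).trans_lt (lt_add_one t))
  linarith

theorem Set.Finite.exists_isMinOn_add_smul_iff {α : Type*} {T : Set α} (hT : T.Finite)
    (φ : α → ℝ) {ψ : α → ℝ} (hψ : ∀ s ∈ T, 0 ≤ ψ s) (hT₀ : ∃ s ∈ T, ψ s = 0) :
    ∃ t : ℝ, ∀ s ∈ T,
      IsMinOn (φ + t • ψ) T s ↔ ψ s = 0 ∧ IsMinOn φ {y ∈ T | ψ y = 0} s := by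
  obtain ⟨u, ⟨huT, hu0⟩, hu⟩ :=
    Set.exists_min_image {y ∈ T | ψ y = 0} φ (hT.subset fun _ hy => hy.1) hT₀
  -- `φ + t • ψ` exceeds `min φ` on `{ψ = 0}` at every point of `T` where `ψ > 0`
  obtain ⟨t, ht⟩ := hT.exists_lt_add_mul φ ψ (φ u)
  set F := φ + t • ψ
  have hFu : F u = φ u := by simp [F, hu0]
  have hF : ∀ s ∈ T, ψ s = 0 → F s = φ s := fun s _ hs => by simp [F, hs]
  have hstrict : ∀ s ∈ T, ψ s ≠ 0 → F u < F s := fun s hs hs0 =>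
    hFu ▸ ht s hs ((hψ s hs).lt_of_ne' hs0)
  have hmin : IsMinOn F T u := isMinOn_iff.2 fun s hs => by
    by_cases hs0 : ψ s = 0
    · rw [hFu, hF s hs hs0]; exact hu s ⟨hs, hs0⟩
    · exact (hstrict s hs hs0).le
  refine ⟨t, fun s hs => ?_⟩
  change IsMinOn F T s ↔ _
  refine ⟨fun h => ?_, fun ⟨hs0, h⟩ => ?_⟩
  · have hs0 : ψ s = 0 := by_contra fun hs0 => (isMinOn_iff.1 h u huT).not_gt (hstrict s hs hs0)
    refine ⟨hs0, isMinOn_iff.2 fun y hy => (hu y hy).trans' ?_⟩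
    rw [← hF s hs hs0, ← hFu]
    exact isMinOn_iff.1 h u huT
  · refine isMinOn_iff.2 fun y hy => (isMinOn_iff.1 hmin y hy).trans' ?_
    rw [hF s hs hs0, hFu]
    exact isMinOn_iff.1 h u ⟨huT, hu0⟩

theorem LinearMap.exists_isMinOn_convexHull_add_smul_iff {T : Set E} (hT : T.Finite)
    (φ ψ : E →ₗ[ℝ] ℝ) (hψ : ∀ s ∈ T, 0 ≤ ψ s) (hT₀ : ∃ s ∈ T, ψ s = 0) :
    ∃ t : ℝ, ∀ s ∈ T, IsMinOn (φ + t • ψ) (convexHull ℝ T) s ↔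
      ψ s = 0 ∧ IsMinOn φ (convexHull ℝ {y ∈ T | ψ y = 0}) s := by
  obtain ⟨t, ht⟩ := hT.exists_isMinOn_add_smul_iff φ hψ hT₀
  refine ⟨t, fun s hs => ?_⟩
  rw [isMinOn_convexHull_iff, isMinOn_convexHull_iff]
  exact ht s hs

end Minimization

namespace Mixed

variable {n : ℕ}

open Classical in
theorem trunc_apply (c : MixedCoeff n) (E : Set (Fin n → ℝ)) (p : (Fin n → ℕ) × (Fin n → ℕ)) :
    trunc c E p = if suppPt p ∈ E then c p else 0 :=
  Finsupp.filter_apply _ _ _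

theorem trunc_trunc (c : MixedCoeff n) (E F : Set (Fin n → ℝ)) :
    trunc (trunc c E) F = trunc c (E ∩ F) := by
  ext p
  simp only [trunc_apply]
  split_ifs <;> simp_all

theorem trunc_congr {c : MixedCoeff n} {E F : Set (Fin n → ℝ)}
    (h : ∀ s ∈ suppPts c, s ∈ E ↔ s ∈ F) : trunc c E = trunc c F := by
  ext p
  by_cases hp : c p = 0
  · simp [trunc_apply, hp]
  · have hpE := h _ ⟨p, Finsupp.mem_support_iff.2 hp, rfl⟩
    simp only [trunc_apply]
    split_ifs <;> tauto

theorem suppPts_finite (c : MixedCoeff n) : (suppPts c).Finite :=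
  c.support.finite_toSet.image _

theorem suppPts_trunc (c : MixedCoeff n) (E : Set (Fin n → ℝ)) :
    suppPts (trunc c E) = suppPts c ∩ E := by
  ext x
  simp only [suppPts, Set.mem_image, Finset.mem_coe, Finsupp.mem_support_iff, trunc_apply,
    Set.mem_inter_iff]
  constructor
  · rintro ⟨p, hp, rfl⟩
    split_ifs at hp with hE
    exacts [⟨⟨p, hp, rfl⟩, hE⟩, absurd rfl hp]
  · rintro ⟨⟨p, hp, rfl⟩, hE⟩
    exact ⟨p, by rwa [if_pos hE], rfl⟩

theorem zero_mem_Gamma0 (c : MixedCoeff n) : (0 : Fin n → ℝ) ∈ Gamma0 c :=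
  subset_convexHull ℝ _ (Set.mem_insert _ _)

theorem IsFaceOf.exists_nonneg_eq_zero_iff {C F : Set (Fin n → ℝ)} (hF : IsFaceOf C F)
    (h0 : (0 : Fin n → ℝ) ∈ affineSpan ℝ F) :
    ∃ g : Fin n → ℝ, ∀ x ∈ C, 0 ≤ g ⬝ᵥ x ∧ (g ⬝ᵥ x = 0 ↔ x ∈ F) := by
  obtain ⟨⟨x₁, hx₁⟩, rfl | ⟨a, rfl⟩⟩ := hF
  · exact ⟨0, fun x hx => by simpa using hx⟩
  have hconst : ∀ x ∈ {x ∈ C | ∀ y ∈ C, ∑ i, a i * x i ≤ ∑ i, a i * y i},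
      dotProductBilin ℝ ℝ a x = a ⬝ᵥ x₁ :=
    fun x hx => le_antisymm (hx.2 x₁ hx₁.1) (hx₁.2 x hx.1)
  have hx₁0 := (dotProductBilin ℝ ℝ a).eq_zero_of_eqOn_of_zero_mem_affineSpan hconst h0
  refine ⟨a, fun x hx => ⟨hx₁0 ▸ hx₁.2 x hx, fun hx0 => ⟨hx, fun y hy => ?_⟩, fun hxF => ?_⟩⟩
  · exact (hx₁.2 y hy).trans' (hx0.trans hx₁0.symm).le
  · exact (hconst x hxF).trans hx₁0

-- `IsMinOn (dotProductBilin ℝ ℝ b) C x` unfolds to the sum inequality in `IsFaceOf`.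
theorem IsGammaPlusFace.exists_eq {c : MixedCoeff n} {Δ : Set (Fin n → ℝ)}
    (hΔ : IsGammaPlusFace c Δ) :
    ∃ b : Fin n → ℝ, Δ = {x ∈ Gamma0 c | IsMinOn (dotProductBilin ℝ ℝ b) (Gamma0 c) x} := by
  obtain ⟨⟨-, hC | hb⟩, h0⟩ := hΔ
  · exact absurd (hC ▸ zero_mem_Gamma0 c) h0
  · exact hb

theorem insert_zero_suppPts_trunc_eq_sep {c : MixedCoeff n} {Δ : Set (Fin n → ℝ)}
    {g : Fin n → ℝ} (hg : ∀ x ∈ suppBar c, 0 ≤ g ⬝ᵥ x ∧ (g ⬝ᵥ x = 0 ↔ x ∈ Δ)) :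
    {s ∈ insert 0 (suppPts c) | g ⬝ᵥ s = 0} = insert 0 (suppPts (trunc c Δ)) := by
  ext s
  rw [suppPts_trunc]
  by_cases hs0 : s = 0
  · simp [hs0]
  by_cases hs : s ∈ suppPts c
  · simp [hs0, hs, (hg s (subset_convexHull ℝ _ ⟨hs, hs0⟩)).2]
  · simp [hs0, hs]

theorem exists_isGammaPlusFace_trunc_eq {c : MixedCoeff n} {Δ Δ' : Set (Fin n → ℝ)}
    {g : Fin n → ℝ} (hg : ∀ x ∈ suppBar c, 0 ≤ g ⬝ᵥ x ∧ (g ⬝ᵥ x = 0 ↔ x ∈ Δ))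
    (hΔ' : IsGammaPlusFace (trunc c Δ) Δ') :
    ∃ Δ'', IsGammaPlusFace c Δ'' ∧ trunc c Δ'' = trunc (trunc c Δ) Δ' := by
  obtain ⟨b, rfl⟩ := hΔ'.exists_eq
  set φ := dotProductBilin ℝ ℝ b
  set ψ := dotProductBilin ℝ ℝ g
  set T := insert (0 : Fin n → ℝ) (suppPts c)
  have hψ : ∀ s ∈ T, 0 ≤ ψ s := by
    intro s hs
    by_cases hs0 : s = 0
    · simp [ψ, hs0]
    exact (hg s (subset_convexHull ℝ _ ⟨hs.resolve_left hs0, hs0⟩)).1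
  have hT₀ : {s ∈ T | ψ s = 0} = insert 0 (suppPts (trunc c Δ)) :=
    insert_zero_suppPts_trunc_eq_sep hg
  obtain ⟨t, ht⟩ := φ.exists_isMinOn_convexHull_add_smul_iff ((suppPts_finite c).insert 0) ψ hψ
    ⟨0, Set.mem_insert _ _, map_zero ψ⟩
  rw [hT₀] at ht
  set Δ'' := {x ∈ Gamma0 c | IsMinOn (dotProductBilin ℝ ℝ (b + t • g)) (Gamma0 c) x}
  have hmem : ∀ s ∈ T, s ∈ Δ'' ↔
      s ∈ insert 0 (suppPts (trunc c Δ)) ∧ IsMinOn φ (Gamma0 (trunc c Δ)) s := by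
    intro s hs
    have hsΓ : s ∈ Gamma0 c := subset_convexHull ℝ _ hs
    have hlin : dotProductBilin ℝ ℝ (b + t • g) = φ + t • ψ := by rw [map_add, map_smul]
    rw [← hT₀]
    simp only [Δ'', Set.mem_ofPred_eq, hlin, hsΓ, hs, true_and]
    exact ht s hs
  have h0 : ¬ IsMinOn φ (Gamma0 (trunc c Δ)) 0 := fun h => hΔ'.2 ⟨zero_mem_Gamma0 _, h⟩
  refine ⟨Δ'', ⟨⟨?_, Or.inr ⟨b + t • g, rfl⟩⟩, fun h => ?_⟩, ?_⟩
  · obtain ⟨x, hx, hxmin⟩ := hΔ'.1.1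
    obtain ⟨u, hu, humin⟩ := φ.exists_mem_isMinOn_convexHull hx hxmin
    exact ⟨u, (hmem u (hT₀ ▸ hu).1).2 ⟨hu, humin⟩⟩
  · exact h0 ((hmem 0 (Set.mem_insert _ _)).1 h).2
  · rw [trunc_trunc]
    refine trunc_congr fun s hs => ?_
    rw [hmem s (Set.mem_insert_of_mem _ hs), suppPts_trunc]
    constructor
    · rintro ⟨rfl | ⟨-, hsΔ⟩, hmin⟩
      · exact absurd hmin h0
      · refine ⟨hsΔ, subset_convexHull ℝ _ (Set.mem_insert_of_mem _ ?_), hmin⟩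
        rw [suppPts_trunc]
        exact ⟨hs, hsΔ⟩
    · rintro ⟨hsΔ, -, hmin⟩
      exact ⟨Or.inr ⟨hs, hsΔ⟩, hmin⟩

end Mixed

/-- Remark 3.10: if `f` is Newton non-degenerate then so is the truncation
`f_Δ` for every bad face `Δ` of `supp(f)‾`. -/
theorem trunc_nondeg_of_badFace {n : ℕ} (c : MixedCoeff n)
    (hnd : Mixed.NewtonNonDeg c) :
    ∀ Δ : Set (Fin n → ℝ), Mixed.IsBadFace c Δ → Mixed.NewtonNonDeg (Mixed.trunc c Δ) := by
  rintro Δ ⟨hface, hspan, -⟩ Δ' hΔ' z hz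
  obtain ⟨g, hg⟩ := Mixed.IsFaceOf.exists_nonneg_eq_zero_iff hface hspan
  obtain ⟨Δ'', hΔ'', htrunc⟩ := Mixed.exists_isGammaPlusFace_trunc_eq hg hΔ'
  rw [← htrunc]
  exact hnd Δ'' hΔ'' z hz
end
end

section
/- Let a, b, c ∈ ℂ and define the mixed polynomial f : ℂ → ℂ by f(z) = a z² + b z z̄ + c z̄². Then f has no critical point, as a map ℝ² → ℝ², in ℂ \ {0} (i.e. Sing f ∩ (ℂ \ {0}) = ∅, which for (a,b,c) ≠ (0,0,0) is exactly the Newton strong non-degeneracy of f) if and only if (|a|² − |c|²)² > |ā·b − c·b̄|². -/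
open Complex Filter Finset

noncomputable section

/- The real derivative of `f` at `z` is `h ↦ A h + B h̄` with `A = ∂f/∂z = 2az + bz̄` and
`B = ∂f/∂z̄ = bz + 2cz̄`; such an `ℝ`-linear map of `ℂ` is onto iff `|A| ≠ |B|`. Moreover
`|A|² - |B|² = 4 ((|a|² - |c|²) |z|² + Re (E z²))` with `E = a b̄ - b c̄ = conj (ā b - c b̄)`.
Since `z²` runs over all nonzero numbers and `Re (E w)` over `[-|E| |w|, |E| |w|]`, this
expression avoids `0` on `ℂ \ {0}` iff `|E| < ||a|² - |c|²|`. -/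

open scoped ComplexConjugate

namespace Complex

theorem surjective_mul_add_mul_conj_iff (A B : ℂ) :
    Function.Surjective (fun h : ℂ => A * h + B * conj h) ↔ normSq A ≠ normSq B := by
  constructor
  · intro hsurj hAB
    -- `w ↦ Ā w - B w̄` kills the image when `|A| = |B|`
    have image_rel : ∀ h : ℂ, conj A * (A * h + B * conj h) = B * conj (A * h + B * conj h) := by
      intro h
      simp only [map_add, map_mul, conj_conj]
      linear_combination h * mul_conj A - h * mul_conj B + h * congrArg ofReal hAB
    obtain ⟨h₁, hh₁⟩ := hsurj 1
    obtain ⟨h₂, hh₂⟩ := hsurj I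
    have e₁ := image_rel h₁
    have e₂ := image_rel h₂
    simp only [hh₁, hh₂, map_one, mul_one, conj_I] at e₁ e₂
    have hB : B = 0 := by linear_combination (-I * e₂ - e₁) / 2 + (conj A + B) / 2 * I_sq
    have hA : A = 0 := by simpa [hB] using congrArg conj e₁
    simp [hA, hB] at hh₁
  · intro hAB w
    have hd : ((normSq A - normSq B : ℝ) : ℂ) ≠ 0 := by
      exact_mod_cast sub_ne_zero.mpr hAB
    refine ⟨(conj A * w - B * conj w) / ((normSq A - normSq B : ℝ) : ℂ), ?_⟩
    simp only [map_div₀, map_sub, map_mul, conj_conj, conj_ofReal]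
    field_simp
    push_cast
    linear_combination w * mul_conj A - w * mul_conj B

theorem forall_ne_zero_mul_normSq_add_re_ne_zero_iff (D : ℝ) (E : ℂ) :
    (∀ z : ℂ, z ≠ 0 → D * normSq z + (E * z ^ 2).re ≠ 0) ↔ normSq E < D ^ 2 := by
  constructor
  · intro h
    by_contra! hle
    obtain rfl | hE := eq_or_ne E 0
    · have hD : D = 0 := by simpa using hle
      exact h 1 one_ne_zero (by simp [hD])
    -- `u / E` is a unit and `Re (E (u / E)) = -D`; take `z` a square root of it
    set u : ℂ := (-D : ℝ) + Real.sqrt (normSq E - D ^ 2) * I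
    have hu : normSq u = normSq E := by
      rw [normSq_add_mul_I, Real.sq_sqrt (sub_nonneg.mpr hle)]
      ring
    obtain ⟨z, hz⟩ := IsAlgClosed.exists_pow_nat_eq (u / E) two_pos
    have hw : normSq (u / E) = 1 := by
      rw [map_div₀, hu, div_self (normSq_pos.mpr hE).ne']
    have hz_norm : normSq z = 1 := by
      rw [← hz, map_pow] at hw
      exact (pow_eq_one_iff_of_nonneg (normSq_nonneg z) two_ne_zero).mp hw
    refine h z (fun hz0 => ?_) ?_
    · simp [hz0] at hz_norm
    · rw [hz, hz_norm, mul_div_cancel₀ u hE]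
      simp [u]
  · intro hlt z hz hzero
    have hre : (E * z ^ 2).re ^ 2 ≤ normSq E * normSq z ^ 2 := by
      rw [← map_pow, ← normSq_mul]
      exact (sq _).trans_le (re_sq_le_normSq _)
    have hz_pos : 0 < normSq z := normSq_pos.mpr hz
    rw [show (E * z ^ 2).re = -(D * normSq z) by linarith] at hre
    nlinarith [mul_pos hz_pos hz_pos]

end Complex

open Complex

theorem hasFDerivAt_mixed_quadratic (a b c z : ℂ) :
    HasFDerivAt (fun w : ℂ => a * w ^ 2 + b * w * conj w + c * conj w ^ 2)
      ((2 * a * z + b * conj z) • ContinuousLinearMap.id ℝ ℂ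
        + (b * z + 2 * c * conj z) • (conjCLE : ℂ →L[ℝ] ℂ)) z := by
  have hid := hasFDerivAt_id (𝕜 := ℝ) z
  have hconj := (conjCLE : ℂ →L[ℝ] ℂ).hasFDerivAt (x := z)
  have hf : (fun w : ℂ => a * w ^ 2 + b * w * conj w + c * conj w ^ 2)
      = fun w => a * id w ^ 2 + b * (id w * conjCLE w) + c * conjCLE w ^ 2 := by
    funext w
    simp only [id, conjCLE_apply]
    ring
  rw [hf]
  refine ((((hid.pow 2).const_mul a).add ((hid.mul hconj).const_mul b)).add
    ((hconj.pow 2).const_mul c)).congr_fderiv ?_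
  ext1 h
  simp only [id_eq, Nat.add_one_sub_one, pow_one, nsmul_eq_mul, Nat.cast_ofNat,
    ContinuousLinearEquiv.coe_coe, ContinuousAlgEquiv.coeCLE_apply, conjCAE_apply, smul_add,
    add_apply, smul_apply, ContinuousLinearMap.id_apply, smul_eq_mul]
  ring

theorem normSq_dz_sub_normSq_dzbar (a b c z : ℂ) :
    normSq (2 * a * z + b * conj z) - normSq (b * z + 2 * c * conj z)
      = 4 * ((normSq a - normSq c) * normSq z + ((a * conj b - b * conj c) * z ^ 2).re) := by
  simp only [normSq_apply, mul_re, mul_im, add_re, add_im, sub_re, sub_im, conj_re, conj_im,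
    sq, re_ofNat, im_ofNat]
  ring

theorem coe_fderiv_mixed_quadratic (a b c z : ℂ) :
    ⇑(fderiv ℝ (fun w : ℂ => a * w ^ 2 + b * w * conj w + c * conj w ^ 2) z)
      = fun h => (2 * a * z + b * conj z) * h + (b * z + 2 * c * conj z) * conj h := by
  rw [(hasFDerivAt_mixed_quadratic a b c z).fderiv]
  rfl

/-- the mixed polynomial `f(z) = az² + bzz̄ + cz̄²` on `ℂ` has no critical
point (as a map `ℝ² → ℝ²`) outside the origin iff `(|a|² − |c|²)² > |āb − cb̄|²`. -/
theorem quadratic_mixed_nondeg_iff (a b c : ℂ) :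
    (∀ z : ℂ, z ≠ 0 → Function.Surjective
      ⇑(fderiv ℝ (fun w : ℂ => a * w ^ 2 + b * w * (starRingEnd ℂ) w
          + c * ((starRingEnd ℂ) w) ^ 2) z)) ↔
    (Complex.normSq a - Complex.normSq c) ^ 2
      > Complex.normSq ((starRingEnd ℂ) a * b - c * (starRingEnd ℂ) b) := by
  have hE : normSq (conj a * b - c * conj b) = normSq (a * conj b - b * conj c) := by
    rw [← normSq_conj]
    congr 1
    simp only [map_sub, map_mul, conj_conj]
    ring
  rw [gt_iff_lt, hE, ← forall_ne_zero_mul_normSq_add_re_ne_zero_iff]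
  refine forall₂_congr fun z _ => ?_
  rw [coe_fderiv_mixed_quadratic, surjective_mul_add_mul_conj_iff, ne_eq, ← sub_eq_zero,
    normSq_dz_sub_normSq_dzbar, mul_eq_zero, or_iff_right four_ne_zero]
end
end
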